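/- arXiv:2404.03941 — 2 statements merged into one kernel-verified Lean document; each statement's English description precedes it below -/
import Mathlib

section
/- Let Ω ⊆ ℝ^N be an open set of finite Lebesgue measure and 0 < q < N/(N-1). Then liminf_{p→1^+} λ_{p,q}(Ω) ≥ λ_{1,q}(Ω). -/
open MeasureTheory Set Filter
open scoped ENNReal

noncomputable section

/-- `E` has smooth boundary: near each boundary point, `E` is the sublevel set of a smooth
function with non-vanishing differential. -/
def HasSmoothBoundary {N : ℕ} (E : Set (EuclideanSpace ℝ (Fin N))) : Prop :=
  ∀ x ∈ frontier E, ∃ U : Set (EuclideanSpace ℝ (Fin N)), IsOpen U ∧ x ∈ U ∧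
    ∃ f : EuclideanSpace ℝ (Fin N) → ℝ, ContDiff ℝ (⊤ : ℕ∞) f ∧
      (∀ y ∈ U, (y ∈ E ↔ f y < 0)) ∧ (∀ y ∈ U, fderiv ℝ f y ≠ 0)

/-- The ratio `H^{N-1}(∂E) / |E|^{1/q}`. -/
def cheegerRatio {N : ℕ} (q : ℝ) (E : Set (EuclideanSpace ℝ (Fin N))) : ℝ :=
  (MeasureTheory.Measure.hausdorffMeasure ((N : ℝ) - 1) (frontier E)).toReal /
    (volume E).toReal ^ (1 / q)

/-- The generalized Cheeger constant `h_q(Ω)`. -/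
def cheeger {N : ℕ} (q : ℝ) (Ω : Set (EuclideanSpace ℝ (Fin N))) : ℝ :=
  sInf { r : ℝ | ∃ E : Set (EuclideanSpace ℝ (Fin N)), IsOpen E ∧ E.Nonempty ∧
    IsCompact (closure E) ∧ closure E ⊆ Ω ∧ HasSmoothBoundary E ∧ r = cheegerRatio q E }

/-- The sharp Poincaré–Sobolev constant `λ_{p,q}(Ω)`. -/
def poincare {N : ℕ} (p q : ℝ) (Ω : Set (EuclideanSpace ℝ (Fin N))) : ℝ :=
  sInf { r : ℝ | ∃ u : EuclideanSpace ℝ (Fin N) → ℝ, ContDiff ℝ (⊤ : ℕ∞) u ∧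
    HasCompactSupport u ∧ tsupport u ⊆ Ω ∧
    (∫ x in Ω, |u x| ^ q) = 1 ∧ r = ∫ x in Ω, ‖fderiv ℝ u x‖ ^ p }

/-- The inradius of `Ω`, as an extended nonnegative real. -/
def einradius {N : ℕ} (Ω : Set (EuclideanSpace ℝ (Fin N))) : ℝ≥0∞ :=
  ⨆ x ∈ Ω, EMetric.infEdist x Ωᶜ

/-- The inradius of `Ω`, as a real number. -/
def inradius {N : ℕ} (Ω : Set (EuclideanSpace ℝ (Fin N))) : ℝ :=
  (einradius Ω).toReal

/-- The high ridge set of `Ω`. -/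
def highRidge {N : ℕ} (Ω : Set (EuclideanSpace ℝ (Fin N))) : Set (EuclideanSpace ℝ (Fin N)) :=
  {x ∈ Ω | Metric.ball x (inradius Ω) ⊆ Ω}

/-- The volume of the unit ball of `ℝ^N`. -/
def ballVol (N : ℕ) : ℝ :=
  (volume (Metric.ball (0 : EuclideanSpace ℝ (Fin N)) 1)).toReal

open scoped Topology

/-! By Hölder's inequality on the finite-measure set `Ω`, every admissible `u` satisfies
`(∫ |∇u|)^p ≤ |Ω|^(p-1) ∫ |∇u|^p`, hence `λ_{1,q}^p / |Ω|^(p-1) ≤ λ_{p,q}` for `p > 1`, and the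
left side tends to `λ_{1,q}` as `p → 1`. A single admissible function also bounds `λ_{p,q}` from
above near `p = 1`; without this the real `liminf` would be a junk value. -/

section Holder

variable {α : Type*} [MeasurableSpace α] {μ : Measure α} [IsFiniteMeasure μ]

theorem rpow_integral_le_measureReal_univ_rpow_mul_integral_rpow {f : α → ℝ} {p : ℝ}
    (hp : 1 < p) (hf : 0 ≤ᵐ[μ] f) (hfp : MemLp f (ENNReal.ofReal p) μ) :
    (∫ x, f x ∂μ) ^ p ≤ μ.real univ ^ (p - 1) * ∫ x, f x ^ p ∂μ := by
  have hpq : p.HolderConjugate (p / (p - 1)) := Real.HolderConjugate.conjExponent hp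
  have holder := integral_mul_le_Lp_mul_Lq_of_nonneg hpq hf (ae_of_all μ fun _ => zero_le_one)
    hfp (memLp_const 1)
  have hexp : 1 / (p / (p - 1)) = 1 - 1 / p := by field_simp
  simp only [mul_one, Real.one_rpow, integral_const, smul_eq_mul, hexp] at holder
  have hint : 0 ≤ ∫ x, f x ^ p ∂μ :=
    integral_nonneg_of_ae (hf.mono fun x hx => Real.rpow_nonneg hx p)
  calc (∫ x, f x ∂μ) ^ p
      ≤ ((∫ x, f x ^ p ∂μ) ^ (1 / p) * μ.real univ ^ (1 - 1 / p)) ^ p :=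
        Real.rpow_le_rpow (integral_nonneg_of_ae hf) holder (by linarith)
    _ = μ.real univ ^ (p - 1) * ∫ x, f x ^ p ∂μ := by
        rw [Real.mul_rpow (by positivity) (by positivity), ← Real.rpow_mul hint,
          ← Real.rpow_mul measureReal_nonneg, one_div_mul_cancel (by linarith), Real.rpow_one,
          mul_comm]
        congr 2
        field_simp

end Holder

variable {N : ℕ}

def PoincareAdmissible (q : ℝ) (Ω : Set (EuclideanSpace ℝ (Fin N)))
    (u : EuclideanSpace ℝ (Fin N) → ℝ) : Prop :=
  ContDiff ℝ (⊤ : ℕ∞) u ∧ HasCompactSupport u ∧ tsupport u ⊆ Ω ∧ (∫ x in Ω, |u x| ^ q) = 1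

theorem poincare_eq_sInf_image (p q : ℝ) (Ω : Set (EuclideanSpace ℝ (Fin N))) :
    poincare p q Ω =
      sInf ((fun u => ∫ x in Ω, ‖fderiv ℝ u x‖ ^ p) '' {u | PoincareAdmissible q Ω u}) := by
  unfold poincare PoincareAdmissible
  congr 1
  ext r
  simp only [mem_ofPred_eq, mem_image, and_assoc, @eq_comm _ r]

theorem poincare_nonneg (p q : ℝ) (Ω : Set (EuclideanSpace ℝ (Fin N))) : 0 ≤ poincare p q Ω := by
  rw [poincare_eq_sInf_image]
  refine Real.sInf_nonneg (forall_mem_image.2 fun u _ => ?_)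
  exact integral_nonneg fun x => Real.rpow_nonneg (norm_nonneg _) p

theorem poincare_eq_zero_of_not_exists {q : ℝ} {Ω : Set (EuclideanSpace ℝ (Fin N))}
    (h : ¬∃ u, PoincareAdmissible q Ω u) (p : ℝ) : poincare p q Ω = 0 := by
  simp only [poincare_eq_sInf_image, not_exists.1 h, ofPred_false, image_empty, Real.sInf_empty]

namespace PoincareAdmissible

variable {q : ℝ} {Ω : Set (EuclideanSpace ℝ (Fin N))} {u : EuclideanSpace ℝ (Fin N) → ℝ}

theorem poincare_le (hu : PoincareAdmissible q Ω u) (p : ℝ) :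
    poincare p q Ω ≤ ∫ x in Ω, ‖fderiv ℝ u x‖ ^ p := by
  rw [poincare_eq_sInf_image]
  refine csInf_le ⟨0, forall_mem_image.2 fun v _ => ?_⟩ (mem_image_of_mem _ hu)
  exact integral_nonneg fun x => Real.rpow_nonneg (norm_nonneg _) p

theorem volume_ne_zero (hu : PoincareAdmissible q Ω u) : volume Ω ≠ 0 := fun h => by
  simpa [Measure.restrict_eq_zero.2 h] using hu.2.2.2

theorem continuous_norm_fderiv (hu : PoincareAdmissible q Ω u) :
    Continuous fun x => ‖fderiv ℝ u x‖ :=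
  (hu.1.continuous_fderiv (by simp)).norm

theorem hasCompactSupport_norm_fderiv (hu : PoincareAdmissible q Ω u) :
    HasCompactSupport fun x => ‖fderiv ℝ u x‖ :=
  (hu.2.1.fderiv (𝕜 := ℝ)).norm

theorem poincare_one_rpow_le (hvol : volume Ω < ⊤) (hu : PoincareAdmissible q Ω u) {p : ℝ}
    (hp : 1 < p) :
    poincare 1 q Ω ^ p ≤ volume.real Ω ^ (p - 1) * ∫ x in Ω, ‖fderiv ℝ u x‖ ^ p := by
  have := Fact.mk hvol
  calc poincare 1 q Ω ^ p ≤ (∫ x in Ω, ‖fderiv ℝ u x‖) ^ p := by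
        gcongr
        · exact poincare_nonneg 1 q Ω
        · simpa only [Real.rpow_one] using hu.poincare_le 1
    _ ≤ volume.real Ω ^ (p - 1) * ∫ x in Ω, ‖fderiv ℝ u x‖ ^ p := by
        rw [← measureReal_restrict_apply_univ]
        exact rpow_integral_le_measureReal_univ_rpow_mul_integral_rpow hp
          (ae_of_all _ fun x => norm_nonneg _)
          (hu.continuous_norm_fderiv.memLp_of_hasCompactSupport hu.hasCompactSupport_norm_fderiv)

theorem isBoundedUnder_le_poincare (hvol : volume Ω < ⊤) (hu : PoincareAdmissible q Ω u) :
    IsBoundedUnder (· ≤ ·) (𝓝 1) fun p => poincare p q Ω := by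
  have := Fact.mk hvol
  obtain ⟨M, hM⟩ := hu.hasCompactSupport_norm_fderiv.exists_bound_of_continuous
    hu.continuous_norm_fderiv
  have hbound : ∀ p : ℝ, 0 ≤ p → poincare p q Ω ≤ M ^ p * volume.real Ω := by
    intro p hp
    calc poincare p q Ω ≤ ∫ x in Ω, ‖fderiv ℝ u x‖ ^ p := hu.poincare_le p
      _ ≤ ‖∫ x in Ω, ‖fderiv ℝ u x‖ ^ p‖ := Real.le_norm_self _
      _ ≤ M ^ p * volume.real Ω := by
        rw [← measureReal_restrict_apply_univ]
        refine norm_integral_le_of_norm_le_const (ae_of_all _ fun x => ?_)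
        rw [Real.norm_of_nonneg (by positivity)]
        exact Real.rpow_le_rpow (norm_nonneg _) ((le_abs_self _).trans (hM x)) hp
  have hlim : Tendsto (fun p : ℝ => M ^ p * volume.real Ω) (𝓝 1)
      (𝓝 (M ^ (1 : ℝ) * volume.real Ω)) :=
    ((Real.continuousAt_const_rpow' one_ne_zero).mul continuousAt_const).tendsto
  refine hlim.isBoundedUnder_le.mono_le ?_
  filter_upwards [eventually_ge_nhds zero_lt_one] with p hp using hbound p hp

end PoincareAdmissible

theorem poincare_one_rpow_div_le_poincare {q : ℝ} {Ω : Set (EuclideanSpace ℝ (Fin N))}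
    (hvol : volume Ω < ⊤) {p : ℝ} (hp : 1 < p) :
    poincare 1 q Ω ^ p / volume.real Ω ^ (p - 1) ≤ poincare p q Ω := by
  by_cases hadm : ∃ u, PoincareAdmissible q Ω u
  · obtain ⟨u₀, hu₀⟩ := hadm
    have hV : 0 < volume.real Ω ^ (p - 1) :=
      Real.rpow_pos_of_pos (ENNReal.toReal_pos hu₀.volume_ne_zero hvol.ne) _
    rw [poincare_eq_sInf_image p]
    refine le_csInf (Nonempty.image _ ⟨u₀, hu₀⟩) (forall_mem_image.2 fun u hu => ?_)
    rw [div_le_iff₀' hV]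
    exact hu.poincare_one_rpow_le hvol hp
  · rw [poincare_eq_zero_of_not_exists hadm, poincare_eq_zero_of_not_exists hadm,
      Real.zero_rpow (by linarith), zero_div]

theorem statement_3_general (N : ℕ) (Ω : Set (EuclideanSpace ℝ (Fin N)))
    (hvol : volume Ω < ⊤)
    (q : ℝ) :
    poincare 1 q Ω ≤ Filter.liminf (fun p : ℝ => poincare p q Ω) (nhdsWithin 1 (Set.Ioi 1)) := by
  by_cases hadm : ∃ u, PoincareAdmissible q Ω u
  swap
  · simp only [poincare_eq_zero_of_not_exists hadm, liminf_const, le_refl]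
  obtain ⟨u, hu⟩ := hadm
  set lam := poincare 1 q Ω
  set V := volume.real Ω
  have hV : V ≠ 0 := (ENNReal.toReal_pos hu.volume_ne_zero hvol.ne).ne'
  have hlower : Tendsto (fun p : ℝ => lam ^ p / V ^ (p - 1)) (𝓝[>] 1) (𝓝 lam) := by
    have hcont : ContinuousAt (fun p : ℝ => lam ^ p / V ^ (p - 1)) 1 :=
      (Real.continuousAt_const_rpow' one_ne_zero).div
        ((Real.continuousAt_const_rpow hV).comp (continuousAt_id.sub continuousAt_const))
        (by simp)
    simpa using hcont.tendsto.mono_left nhdsWithin_le_nhds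
  have hupper := (hu.isBoundedUnder_le_poincare hvol).mono (nhdsWithin_le_nhds (s := Ioi 1))
  calc lam = liminf (fun p : ℝ => lam ^ p / V ^ (p - 1)) (𝓝[>] 1) := hlower.liminf_eq.symm
    _ ≤ liminf (fun p => poincare p q Ω) (𝓝[>] 1) :=
      liminf_le_liminf (eventually_mem_nhdsWithin.mono fun p hp =>
        poincare_one_rpow_div_le_poincare hvol hp)
        hlower.isBoundedUnder_ge hupper.isCoboundedUnder_ge

/-- if `Ω` has finite measure, `liminf_{p→1⁺} λ_{p,q}(Ω) ≥ λ_{1,q}(Ω)`. -/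
theorem statement_3 (N : ℕ) (Ω : Set (EuclideanSpace ℝ (Fin N))) (hΩ : IsOpen Ω)
    (hvol : volume Ω < ⊤)
    (q : ℝ) (hq : 0 < q) (hq' : q * ((N : ℝ) - 1) < N) :
    poincare 1 q Ω ≤ Filter.liminf (fun p : ℝ => poincare p q Ω) (nhdsWithin 1 (Set.Ioi 1)) :=
  statement_3_general N Ω hvol q

end
end

section
/- Let Ω ⊆ ℝ² be an unbounded open convex set with finite inradius r_Ω < ∞ and empty high ridge set M(Ω) = ∅. Then there exists a convex function f : (-r_Ω, r_Ω) → ℝ such that at least one of the limits of f(t) as t → (-r_Ω)^+ or as t → (r_Ω)^- equals +∞, and such that, up to a rigid motion of the plane, Ω = { (x₁, x₂) ∈ ℝ² : -r_Ω < x₂ < r_Ω and x₁ > f(x₂) }. -/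
/-!
An unbounded open convex set `Ω` recedes along some unit vector `v`: a limit of the directions
towards points of `Ω` escaping to infinity. After a rigid motion `v` is the first basis vector,
so every horizontal section of `Ω` is an up-closed open set of reals. A rectangle
`(M, ∞) × (c, d)` inside `Ω` carries a ball of radius `(d - c) / 2`, so the heights of `Ω` form an
interval of length `2 r`, which we centre at `0`. A section that is a full line would make `Ω` a
strip, whose midline lies in the high ridge; hence every section is a half-line `(f y, ∞)` and `Ω`
is the strict epigraph of `f` over `(-r, r)`, with `f` convex because `Ω` is. If `f` were bounded
above, `Ω` would contain a half-strip of width `2 r`, hence a ball of radius `r`. A convex function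
on an interval that is unbounded above tends to `+∞` at one of its endpoints.
-/

open MeasureTheory Set Filter
open scoped ENNReal

noncomputable section

open Topology Metric

section Recession

variable {E F : Type*} [AddCommGroup E] [Module ℝ E] [AddCommGroup F] [Module ℝ F]

def IsRecessionDir (s : Set E) (v : E) : Prop :=
  ∀ x ∈ s, ∀ t : ℝ, 0 ≤ t → x + t • v ∈ s

lemma Convex.add_smul_mem_of_le {s : Set E} (hs : Convex ℝ s) {x u : E} {a b : ℝ}
    (hx : x ∈ s) (hb : x + b • u ∈ s) (ha : 0 ≤ a) (hab : a ≤ b) : x + a • u ∈ s := by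
  rcases ha.eq_or_lt with rfl | ha
  · simpa using hx
  have hb0 : 0 < b := ha.trans_le hab
  have := hs.add_smul_mem hx hb ⟨div_nonneg ha.le hb0.le, (div_le_one hb0).2 hab⟩
  rwa [smul_smul, div_mul_cancel₀ a hb0.ne'] at this

lemma IsRecessionDir.image {s : Set E} {v : E} (h : IsRecessionDir s v) (f : E →ᵃ[ℝ] F) :
    IsRecessionDir (f '' s) (f.linear v) := by
  rintro _ ⟨x, hx, rfl⟩ t ht
  refine ⟨x + t • v, h x hx t ht, ?_⟩
  rw [add_comm x, ← vadd_eq_add, f.map_vadd, vadd_eq_add, f.linear.map_smul, add_comm]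

end Recession

section RecessionNormed

variable {E : Type*} [NormedAddCommGroup E] [NormedSpace ℝ E]

lemma IsOpen.isRecessionDir_of_forall_mem_closure {s : Set E} (hs : IsOpen s)
    (hconv : Convex ℝ s) {x₀ v : E} (h : ∀ t : ℝ, 0 ≤ t → x₀ + t • v ∈ closure s) :
    IsRecessionDir s v := by
  intro x hx t ht
  -- `x + t • v = (1 - a) • z a + a • (x₀ + (t / a) • v)`, where `z a → x` as `a → 0`
  let z : ℝ → E := fun a => (1 - a)⁻¹ • (x - a • x₀)
  have hz : Tendsto z (𝓝[>] 0) (𝓝 x) := by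
    have : ContinuousAt z 0 := by fun_prop (disch := norm_num)
    simpa [z] using this.tendsto.mono_left nhdsWithin_le_nhds
  obtain ⟨a, hza, ha⟩ :=
    ((hz.eventually (hs.mem_nhds hx)).and (Ioo_mem_nhdsGT zero_lt_one)).exists
  have hcomb := hconv.combo_interior_closure_mem_interior (hs.interior_eq.symm ▸ hza)
    (h (t / a) (div_nonneg ht ha.1.le)) (sub_pos.2 ha.2) ha.1.le (sub_add_cancel 1 a)
  rw [hs.interior_eq] at hcomb
  convert hcomb using 1
  rw [smul_smul, mul_inv_cancel₀ (sub_pos.2 ha.2).ne', one_smul, smul_add, smul_smul,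
    mul_div_cancel₀ t ha.1.ne']
  abel

lemma exists_norm_eq_one_isRecessionDir [ProperSpace E] {s : Set E} (hs : IsOpen s)
    (hconv : Convex ℝ s) (hunb : ¬ Bornology.IsBounded s) :
    ∃ v : E, ‖v‖ = 1 ∧ IsRecessionDir s v := by
  obtain ⟨x₀, hx₀⟩ := Bornology.nonempty_of_not_isBounded hunb
  have hcl := hconv.closure
  let K : ℕ → Set E := fun n => sphere 0 1 ∩ {u | x₀ + (n : ℝ) • u ∈ closure s}
  have hanti : Antitone K := fun m n hmn u hu =>
    ⟨hu.1, hcl.add_smul_mem_of_le (subset_closure hx₀) hu.2 m.cast_nonneg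
      (Nat.cast_le.2 hmn)⟩
  have hne : ∀ n, (K n).Nonempty := by
    intro n
    obtain ⟨x, hx, hfar⟩ : ∃ x ∈ s, (n : ℝ) < ‖x - x₀‖ := by
      by_contra! h
      exact hunb ((isBounded_iff_subset_closedBall x₀).2
        ⟨n, fun x hx => mem_closedBall_iff_norm.2 (h x hx)⟩)
    have hpos : 0 < ‖x - x₀‖ := n.cast_nonneg.trans_lt hfar
    refine ⟨‖x - x₀‖⁻¹ • (x - x₀), by simp [norm_smul, hpos.ne'], subset_closure ?_⟩
    refine hconv.add_smul_mem_of_le (b := ‖x - x₀‖) hx₀ ?_ n.cast_nonneg hfar.le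
    simpa [smul_smul, mul_inv_cancel₀ hpos.ne'] using hx
  obtain ⟨v, hv⟩ := IsCompact.nonempty_iInter_of_directed_nonempty_isCompact_isClosed K
    hanti.directed_ge hne (fun n => (isCompact_sphere 0 1).inter_right
      (isClosed_closure.preimage (by fun_prop)))
    (fun n => isClosed_sphere.inter (isClosed_closure.preimage (by fun_prop)))
  rw [mem_iInter] at hv
  refine ⟨v, mem_sphere_zero_iff_norm.1 (hv 0).1,
    hs.isRecessionDir_of_forall_mem_closure hconv (x₀ := x₀) fun t ht => ?_⟩
  exact hcl.add_smul_mem_of_le (subset_closure hx₀) (hv ⌈t⌉₊).2 ht (Nat.le_ceil t)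

end RecessionNormed

section Inradius

variable {N : ℕ}

lemma einradius_image (g : EuclideanSpace ℝ (Fin N) ≃ᵃⁱ[ℝ] EuclideanSpace ℝ (Fin N))
    (Ω : Set (EuclideanSpace ℝ (Fin N))) : einradius (g '' Ω) = einradius Ω := by
  unfold einradius
  rw [iSup_image]
  refine iSup_congr fun x => iSup_congr fun _ => ?_
  rw [← image_compl_eq g.bijective]
  exact Metric.infEDist_image g.isometry

lemma inradius_image (g : EuclideanSpace ℝ (Fin N) ≃ᵃⁱ[ℝ] EuclideanSpace ℝ (Fin N))
    (Ω : Set (EuclideanSpace ℝ (Fin N))) : inradius (g '' Ω) = inradius Ω := by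
  rw [inradius, einradius_image, inradius]

lemma highRidge_image (g : EuclideanSpace ℝ (Fin N) ≃ᵃⁱ[ℝ] EuclideanSpace ℝ (Fin N))
    (Ω : Set (EuclideanSpace ℝ (Fin N))) : highRidge (g '' Ω) = g '' highRidge Ω := by
  ext p
  obtain ⟨x, rfl⟩ := g.surjective p
  have hball : ball (g x) (inradius Ω) = g '' ball x (inradius Ω) :=
    (g.toIsometryEquiv.image_ball x _).symm
  simp only [highRidge, mem_ofPred_eq, inradius_image, hball, g.injective.mem_set_image,
    image_subset_image_iff g.injective]

lemma inradius_nonneg (Ω : Set (EuclideanSpace ℝ (Fin N))) : 0 ≤ inradius Ω :=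
  ENNReal.toReal_nonneg

lemma le_inradius_of_ball_subset {Ω : Set (EuclideanSpace ℝ (Fin N))} (hfin : einradius Ω ≠ ⊤)
    {x : EuclideanSpace ℝ (Fin N)} {ρ : ℝ} (hx : x ∈ Ω) (hball : ball x ρ ⊆ Ω) :
    ρ ≤ inradius Ω := by
  refine (ENNReal.ofReal_le_iff_le_toReal hfin).1 (le_iSup₂_of_le x hx ?_)
  refine Metric.le_infEDist.2 fun y hy => ?_
  rw [edist_dist]
  exact ENNReal.ofReal_le_ofReal (not_lt.1 fun h => hy (hball (mem_ball'.2 h)))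

lemma inradius_le_of_forall_mem_Ioo {Ω : Set (EuclideanSpace ℝ (Fin N))} (i : Fin N)
    {α β : ℝ} (hαβ : α ≤ β) (h : ∀ p ∈ Ω, p i ∈ Ioo α β) : inradius Ω ≤ (β - α) / 2 := by
  refine ENNReal.toReal_le_of_le_ofReal (by linarith) (iSup₂_le fun x hx => ?_)
  have hexit : ∀ c ∉ Ioo α β, Metric.infEDist x Ωᶜ ≤ ENNReal.ofReal |c - x i| := by
    intro c hc
    let y := x + (c - x i) • EuclideanSpace.single i 1
    have hy : y ∈ Ωᶜ := fun hy => hc (by simpa [y] using h y hy)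
    refine (Metric.infEDist_le_edist_of_mem hy).trans_eq ?_
    rw [edist_dist, dist_comm, dist_eq_norm]
    simp [y, norm_smul]
  obtain ⟨hα, hβ⟩ := h x hx
  rcases le_total (x i) ((α + β) / 2) with hmid | hmid
  · exact (hexit α (by simp)).trans
      (ENNReal.ofReal_le_ofReal (by rw [abs_le]; constructor <;> linarith))
  · exact (hexit β (by simp)).trans
      (ENNReal.ofReal_le_ofReal (by rw [abs_le]; constructor <;> linarith))

end Inradius

section RealLine

lemma IsOpen.eq_Ioo_csInf_csSup {s : Set ℝ} (hs : IsOpen s) (hc : IsConnected s)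
    (hb : BddBelow s) (ha : BddAbove s) : s = Ioo (sInf s) (sSup s) :=
  ((hs.subset_interior_iff.2 (subset_Icc_csInf_csSup hb ha)).trans_eq interior_Icc).antisymm
    (hc.Ioo_csInf_csSup_subset hb ha)

lemma IsOpen.eq_Ioi_csInf {s : Set ℝ} (hs : IsOpen s) (hc : IsPreconnected s)
    (hb : BddBelow s) (ha : ¬ BddAbove s) : s = Ioi (sInf s) :=
  ((hs.subset_interior_iff.2 fun _ hx => csInf_le hb hx).trans_eq interior_Ici).antisymm
    (hc.Ioi_csInf_subset hb ha)

variable {a b m : ℝ} {f : ℝ → ℝ}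

lemma ConvexOn.tendsto_nhdsLT_atTop (hf : ConvexOn ℝ (Ioo a b) f) (hm : m ∈ Ioo a b)
    (hunb : ¬ BddAbove (f '' Ico m b)) : Tendsto f (𝓝[<] b) atTop := by
  refine tendsto_atTop.2 fun M => ?_
  obtain ⟨_, ⟨y, hy, rfl⟩, hMy⟩ := not_bddAbove_iff.1 hunb (max M (f m))
  have hmy : m < y := hy.1.lt_of_ne (by rintro rfl; exact (le_max_right _ _).not_gt hMy)
  filter_upwards [Ioo_mem_nhdsLT hy.2] with z hz
  have hyz := hf.le_right_of_left_le'' hm ⟨hm.1.trans (hmy.trans hz.1), hz.2⟩ hmy hz.1.le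
    ((le_max_right _ _).trans hMy.le)
  exact (le_max_left _ _).trans (hMy.le.trans hyz)

lemma ConvexOn.tendsto_nhdsGT_atTop (hf : ConvexOn ℝ (Ioo a b) f) (hm : m ∈ Ioo a b)
    (hunb : ¬ BddAbove (f '' Ioc a m)) : Tendsto f (𝓝[>] a) atTop := by
  refine tendsto_atTop.2 fun M => ?_
  obtain ⟨_, ⟨y, hy, rfl⟩, hMy⟩ := not_bddAbove_iff.1 hunb (max M (f m))
  have hym : y < m := hy.2.lt_of_ne (by rintro rfl; exact (le_max_right _ _).not_gt hMy)
  filter_upwards [Ioo_mem_nhdsGT hy.1] with z hz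
  have hyz := hf.le_left_of_right_le'' ⟨hz.1, (hz.2.trans hym).trans hm.2⟩ hm hz.2.le hym
    ((le_max_right _ _).trans hMy.le)
  exact (le_max_left _ _).trans (hMy.le.trans hyz)

lemma ConvexOn.tendsto_atTop_of_not_bddAbove (hf : ConvexOn ℝ (Ioo a b) f)
    (hunb : ¬ BddAbove (f '' Ioo a b)) :
    Tendsto f (𝓝[>] a) atTop ∨ Tendsto f (𝓝[<] b) atTop := by
  obtain ⟨m, hm⟩ : (Ioo a b).Nonempty := by
    by_contra! h
    simp [h] at hunb
  rw [← Ioc_union_Ico_eq_Ioo hm.1 hm.2, image_union, bddAbove_union, not_and_or] at hunb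
  exact hunb.imp (hf.tendsto_nhdsGT_atTop hm) (hf.tendsto_nhdsLT_atTop hm)

end RealLine

section Plane

local notation "ℝ²" => EuclideanSpace ℝ (Fin 2)

lemma EuclideanSpace.eta_fin_two (p : ℝ²) : p = !₂[p 0, p 1] := by
  ext i; fin_cases i <;> rfl

def heights (Ω : Set ℝ²) : Set ℝ := (fun p : ℝ² => p 1) '' Ω

def lowerBoundary (Ω : Set ℝ²) (y : ℝ) : ℝ := sInf {x | !₂[x, y] ∈ Ω}

variable {Ω : Set ℝ²}

lemma IsRecessionDir.mem_of_le (hrec : IsRecessionDir Ω !₂[1, 0]) {p q : ℝ²} (hq : q ∈ Ω)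
    (h0 : q 0 ≤ p 0) (h1 : q 1 = p 1) : p ∈ Ω := by
  convert hrec q hq (p 0 - q 0) (sub_nonneg.2 h0) using 1
  ext i; fin_cases i <;> simp [h1]

lemma IsRecessionDir.mem_of_ge (hrec : IsRecessionDir Ω !₂[-1, 0]) {p q : ℝ²} (hq : q ∈ Ω)
    (h0 : p 0 ≤ q 0) (h1 : q 1 = p 1) : p ∈ Ω := by
  convert hrec q hq (q 0 - p 0) (sub_nonneg.2 h0) using 1
  ext i; fin_cases i <;> simp [h1]

lemma IsRecessionDir.mem_of_mem_segment (hrec : IsRecessionDir Ω !₂[1, 0])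
    (hconv : Convex ℝ Ω) {p q z : ℝ²} (hp : p ∈ Ω) (hq : q ∈ Ω) (h0 : max (p 0) (q 0) ≤ z 0)
    (h1 : z 1 ∈ segment ℝ (p 1) (q 1)) : z ∈ Ω := by
  obtain ⟨a, b, ha, hb, hab, hz⟩ := h1
  refine hrec.mem_of_le (hconv hp hq ha hb hab) ?_ (by simpa using hz)
  simpa using (Convex.combo_le_max (p 0) (q 0) ha hb hab).trans h0

lemma ball_subset_halfStrip (x y ρ : ℝ) :
    ball !₂[x, y] ρ ⊆ {p : ℝ² | x - ρ < p 0 ∧ p 1 ∈ Ioo (y - ρ) (y + ρ)} := by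
  intro p hp
  have h0 := (PiLp.dist_apply_le p _ 0).trans_lt hp
  have h1 := (PiLp.dist_apply_le p _ 1).trans_lt hp
  simp only [Matrix.cons_val_zero, Matrix.cons_val_one, Real.dist_eq, abs_lt] at h0 h1
  exact ⟨by linarith, by linarith, by linarith⟩

lemma IsRecessionDir.sub_le_two_mul_inradius (hrec : IsRecessionDir Ω !₂[1, 0])
    (hconv : Convex ℝ Ω) (hfin : einradius Ω ≠ ⊤) {c d : ℝ} (hc : c ∈ heights Ω)
    (hd : d ∈ heights Ω) : d - c ≤ 2 * inradius Ω := by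
  obtain ⟨p, hp, rfl⟩ := hc
  obtain ⟨q, hq, rfl⟩ := hd
  rcases lt_or_ge (q 1) (p 1) with hdc | hcd
  · linarith [inradius_nonneg Ω]
  have hrect : ∀ z : ℝ², max (p 0) (q 0) ≤ z 0 → z 1 ∈ Icc (p 1) (q 1) → z ∈ Ω :=
    fun z h0 h1 => hrec.mem_of_mem_segment hconv hp hq h0 (segment_eq_Icc hcd ▸ h1)
  set ρ := (q 1 - p 1) / 2 with hρ
  have hball : ball !₂[max (p 0) (q 0) + ρ, (p 1 + q 1) / 2] ρ ⊆ Ω := fun z hz => by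
    obtain ⟨h0, h1, h2⟩ := ball_subset_halfStrip _ _ _ hz
    exact hrect z (by linarith) ⟨by linarith, by linarith⟩
  have hcenter : !₂[max (p 0) (q 0) + ρ, (p 1 + q 1) / 2] ∈ Ω :=
    hrect _ (by simp [hρ]; linarith) (by simp; constructor <;> linarith)
  linarith [le_inradius_of_ball_subset hfin hcenter hball]

lemma IsRecessionDir.exists_heights_eq_Ioo (hrec : IsRecessionDir Ω !₂[1, 0])
    (hΩ : IsOpen Ω) (hconv : Convex ℝ Ω) (hne : Ω.Nonempty) (hfin : einradius Ω ≠ ⊤) :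
    ∃ c, heights Ω = Ioo (c - inradius Ω) (c + inradius Ω) := by
  have hwidth := fun c d => hrec.sub_le_two_mul_inradius hconv hfin (c := c) (d := d)
  obtain ⟨y₀, hy₀⟩ : (heights Ω).Nonempty := hne.image _
  have hsub : heights Ω ⊆ Icc (y₀ - 2 * inradius Ω) (y₀ + 2 * inradius Ω) := fun y hy =>
    ⟨by linarith [hwidth y y₀ hy hy₀], by linarith [hwidth y₀ y hy₀ hy]⟩
  have hconn : IsConnected (heights Ω) :=
    ⟨⟨y₀, hy₀⟩, hconv.isPreconnected.image _
      (by fun_prop : Continuous fun p : ℝ² => p 1).continuousOn⟩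
  have hopen : IsOpen (heights Ω) := PiLp.isOpenMap_apply _ _ 1 Ω hΩ
  have heq : heights Ω = Ioo (sInf (heights Ω)) (sSup (heights Ω)) :=
    hopen.eq_Ioo_csInf_csSup hconn (bddBelow_Icc.mono hsub) (bddAbove_Icc.mono hsub)
  set α := sInf (heights Ω)
  set β := sSup (heights Ω)
  have hαβ : α < β := nonempty_Ioo.1 (heq ▸ ⟨y₀, hy₀⟩)
  have hr_le : inradius Ω ≤ (β - α) / 2 :=
    inradius_le_of_forall_mem_Ioo 1 hαβ.le fun p hp => heq ▸ mem_image_of_mem _ hp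
  have hr_ge : (β - α) / 2 ≤ inradius Ω := by
    by_contra! h
    set ε := ((β - α) / 2 - inradius Ω) / 2 with hε
    have := inradius_nonneg Ω
    have := hwidth (α + ε) (β - ε) (heq ▸ ⟨by linarith, by linarith⟩)
      (heq ▸ ⟨by linarith, by linarith⟩)
    linarith
  exact ⟨(α + β) / 2, heq.trans (by congr 1 <;> linarith)⟩

lemma convexOn_of_convex_strictEpigraph {s : Set ℝ} {f : ℝ → ℝ} (hs : Convex ℝ s)
    (h : Convex ℝ {p : ℝ² | p 1 ∈ s ∧ f (p 1) < p 0}) : ConvexOn ℝ s f := by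
  refine ⟨hs, fun y₁ hy₁ y₂ hy₂ a b ha hb hab => le_of_forall_pos_lt_add fun ε hε => ?_⟩
  have hmem := h (x := !₂[f y₁ + ε, y₁]) (y := !₂[f y₂ + ε, y₂])
    ⟨hy₁, by simpa using hε⟩ ⟨hy₂, by simpa using hε⟩ ha hb hab
  calc f (a • y₁ + b • y₂) < a * (f y₁ + ε) + b * (f y₂ + ε) := by simpa using hmem.2
    _ = a • f y₁ + b • f y₂ + ε := by simp only [smul_eq_mul]; linear_combination ε * hab

lemma slice_eq_Ioi_lowerBoundary (hΩ : IsOpen Ω) (hrec : IsRecessionDir Ω !₂[1, 0])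
    (hbdd : ∀ y, BddBelow {x | !₂[x, y] ∈ Ω}) {y : ℝ} (hy : y ∈ heights Ω) :
    {x | !₂[x, y] ∈ Ω} = Ioi (lowerBoundary Ω y) := by
  obtain ⟨p, hp, rfl⟩ := hy
  have hup : IsUpperSet {x | !₂[x, p 1] ∈ Ω} := fun x x' hle hx =>
    hrec.mem_of_le hx (by simpa) rfl
  have hne : {x | !₂[x, p 1] ∈ Ω}.Nonempty :=
    ⟨p 0, by rwa [mem_ofPred_eq, ← EuclideanSpace.eta_fin_two]⟩
  exact (hΩ.preimage (by fun_prop)).eq_Ioi_csInf hup.ordConnected.isPreconnected (hbdd _)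
    (hup.not_bddAbove hne)

lemma eq_setOf_lowerBoundary_lt (hΩ : IsOpen Ω) (hrec : IsRecessionDir Ω !₂[1, 0])
    (hbdd : ∀ y, BddBelow {x | !₂[x, y] ∈ Ω}) :
    Ω = {p : ℝ² | p 1 ∈ heights Ω ∧ lowerBoundary Ω (p 1) < p 0} := by
  ext p
  have hslice (hy : p 1 ∈ heights Ω) : p ∈ Ω ↔ lowerBoundary Ω (p 1) < p 0 := by
    rw [← mem_Ioi, ← slice_eq_Ioi_lowerBoundary hΩ hrec hbdd hy, mem_ofPred_eq,
      ← EuclideanSpace.eta_fin_two]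
  exact ⟨fun hp => ⟨mem_image_of_mem _ hp, (hslice (mem_image_of_mem _ hp)).1 hp⟩,
    fun ⟨hy, hlt⟩ => (hslice hy).2 hlt⟩

lemma not_halfStrip_subset (hM : highRidge Ω = ∅) (hr : 0 < inradius Ω) (M : ℝ) :
    ¬ {p : ℝ² | M < p 0 ∧ p 1 ∈ Ioo (-inradius Ω) (inradius Ω)} ⊆ Ω := by
  intro h
  have hball : ball !₂[M + inradius Ω, 0] (inradius Ω) ⊆ Ω := fun z hz =>
    h (by simpa using ball_subset_halfStrip _ _ _ hz)
  exact eq_empty_iff_forall_notMem.1 hM _ ⟨hball (mem_ball_self hr), hball⟩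

lemma bddBelow_slice (hΩ : IsOpen Ω) (hconv : Convex ℝ Ω) (hrec : IsRecessionDir Ω !₂[1, 0])
    (hheights : heights Ω = Ioo (-inradius Ω) (inradius Ω)) (hM : highRidge Ω = ∅)
    (hr : 0 < inradius Ω) (y : ℝ) : BddBelow {x | !₂[x, y] ∈ Ω} := by
  by_contra hunb
  have hline : ∀ x, !₂[x, y] ∈ Ω := fun x => by
    obtain ⟨x', hx', hlt⟩ := not_bddBelow_iff.1 hunb x
    exact hrec.mem_of_le hx' (by simpa using hlt.le) rfl
  have hrec' : IsRecessionDir Ω !₂[-1, 0] :=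
    hΩ.isRecessionDir_of_forall_mem_closure hconv (x₀ := !₂[0, y]) fun t _ =>
      subset_closure (by convert hline (-t) using 1; ext i; fin_cases i <;> simp)
  refine not_halfStrip_subset hM hr 0 fun p hp => ?_
  obtain ⟨q, hq, hq1⟩ : p 1 ∈ heights Ω := hheights ▸ hp.2
  rcases le_total (q 0) (p 0) with h0 | h0
  · exact hrec.mem_of_le hq h0 hq1
  · exact hrec'.mem_of_ge hq h0 hq1

theorem exists_convexOn_tendsto_eq_strictEpigraph (hΩ : IsOpen Ω) (hconv : Convex ℝ Ω)
    (hrec : IsRecessionDir Ω !₂[1, 0]) (hheights : heights Ω = Ioo (-inradius Ω) (inradius Ω))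
    (hM : highRidge Ω = ∅) (hne : Ω.Nonempty) :
    ∃ f : ℝ → ℝ, ConvexOn ℝ (Ioo (-inradius Ω) (inradius Ω)) f ∧
      (Tendsto f (𝓝[>] (-inradius Ω)) atTop ∨ Tendsto f (𝓝[<] (inradius Ω)) atTop) ∧
      Ω = {p : ℝ² | p 1 ∈ Ioo (-inradius Ω) (inradius Ω) ∧ f (p 1) < p 0} := by
  have hr : 0 < inradius Ω := by
    obtain ⟨y, hy⟩ : (heights Ω).Nonempty := hne.image _
    have := nonempty_Ioo.1 ⟨y, hheights ▸ hy⟩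
    linarith
  have heq := eq_setOf_lowerBoundary_lt hΩ hrec (bddBelow_slice hΩ hconv hrec hheights hM hr)
  rw [hheights] at heq
  have hf : ConvexOn ℝ (Ioo (-inradius Ω) (inradius Ω)) (lowerBoundary Ω) :=
    convexOn_of_convex_strictEpigraph (convex_Ioo _ _) (heq ▸ hconv)
  have hunb : ¬ BddAbove (lowerBoundary Ω '' Ioo (-inradius Ω) (inradius Ω)) := by
    rintro ⟨B, hB⟩
    exact not_halfStrip_subset hM hr B fun p hp =>
      heq.ge ⟨hp.2, (hB (mem_image_of_mem _ hp.2)).trans_lt hp.1⟩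
  exact ⟨lowerBoundary Ω, hf, hf.tendsto_atTop_of_not_bddAbove hunb, heq⟩

lemma exists_affineIsometryEquiv_isRecessionDir_heights_eq (hΩ : IsOpen Ω) (hconv : Convex ℝ Ω)
    (hunb : ¬ Bornology.IsBounded Ω) (hfin : einradius Ω ≠ ⊤) :
    ∃ g : ℝ² ≃ᵃⁱ[ℝ] ℝ², IsRecessionDir (g '' Ω) !₂[1, 0] ∧
      heights (g '' Ω) = Ioo (-inradius Ω) (inradius Ω) := by
  obtain ⟨v, hv, hrec⟩ := exists_norm_eq_one_isRecessionDir hΩ hconv hunb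
  let ρ : ℝ² ≃ᵃⁱ[ℝ] ℝ² := (Submodule.reflection (ℝ ∙ (v - !₂[1, 0]))ᗮ).toAffineIsometryEquiv
  have hρ : ρ.linear v = !₂[1, 0] :=
    Submodule.reflection_sub (hv.trans (by simp [EuclideanSpace.norm_eq]))
  have hrec₁ : IsRecessionDir (ρ '' Ω) !₂[1, 0] := hρ ▸ hrec.image ρ.toAffineMap
  obtain ⟨c, hc⟩ := hrec₁.exists_heights_eq_Ioo (Ω := ρ '' Ω)
    (ρ.toHomeomorph.isOpenMap Ω hΩ) (hconv.affine_image ρ.toAffineMap)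
    ((Bornology.nonempty_of_not_isBounded hunb).image ρ) (by rwa [einradius_image])
  rw [inradius_image] at hc
  let τ : ℝ² ≃ᵃⁱ[ℝ] ℝ² := AffineIsometryEquiv.constVAdd ℝ ℝ² !₂[0, -c]
  refine ⟨ρ.trans τ, ?_, ?_⟩
  · rw [AffineIsometryEquiv.coe_trans, image_comp]
    exact hrec₁.image τ.toAffineMap
  · have hτ : ∀ p, τ p 1 = p 1 - c := fun p => by simp [τ, sub_eq_neg_add]
    rw [AffineIsometryEquiv.coe_trans, image_comp, heights, image_image]
    simp_rw [hτ]
    rw [← image_image (· - c) (fun p : ℝ² => p 1), ← heights, hc, image_sub_const_Ioo]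
    ring_nf

end Plane

/-- an unbounded open convex set `Ω ⊆ ℝ²` with finite inradius and empty
high ridge set is, up to a rigid motion, the epigraph
`{(x₁,x₂) : -r_Ω < x₂ < r_Ω, x₁ > f(x₂)}` of a convex function
`f : (-r_Ω, r_Ω) → ℝ` blowing up to `+∞` at (at least) one endpoint. -/
theorem statement_15 (Ω : Set (EuclideanSpace ℝ (Fin 2)))
    (hΩ : IsOpen Ω) (hconv : Convex ℝ Ω) (hunb : ¬ Bornology.IsBounded Ω)
    (hfin : einradius Ω < ⊤) (hM : highRidge Ω = ∅) :
    ∃ f : ℝ → ℝ, ConvexOn ℝ (Set.Ioo (-(inradius Ω)) (inradius Ω)) f ∧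
      (Filter.Tendsto f (nhdsWithin (-(inradius Ω)) (Set.Ioi (-(inradius Ω)))) Filter.atTop ∨
        Filter.Tendsto f (nhdsWithin (inradius Ω) (Set.Iio (inradius Ω))) Filter.atTop) ∧
      ∃ g : EuclideanSpace ℝ (Fin 2) ≃ᵃⁱ[ℝ] EuclideanSpace ℝ (Fin 2),
        g '' Ω = {p : EuclideanSpace ℝ (Fin 2) |
          p 1 ∈ Set.Ioo (-(inradius Ω)) (inradius Ω) ∧ f (p 1) < p 0} := by
  obtain ⟨g, hrec, hheights⟩ :=
    exists_affineIsometryEquiv_isRecessionDir_heights_eq hΩ hconv hunb hfin.ne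
  rw [← inradius_image g] at hheights
  obtain ⟨f, hf, hlim, heq⟩ := exists_convexOn_tendsto_eq_strictEpigraph (Ω := g '' Ω)
    (g.toHomeomorph.isOpenMap Ω hΩ) (hconv.affine_image g.toAffineMap) hrec hheights
    (by rw [highRidge_image, hM, image_empty]) ((Bornology.nonempty_of_not_isBounded hunb).image g)
  rw [inradius_image] at hf hlim heq
  exact ⟨f, hf, hlim, g, heq⟩

end
end
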